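/- In a unique guarded fixpoint category (C, ▷), the dagger satisfies the double dagger identity: for every f : ▷X × ▷X × Y → X, f†† = (f ∘ (Δ_{▷X} × id_Y))†, where Δ_{▷X} : ▷X → ▷X × ▷X is the diagonal. -/

import Mathlib

open CategoryTheory CategoryTheory.Limits

/-!
Both sides are guarded fixpoints of `f ∘ (Δ × id)`, so they agree by uniqueness. For
`s = f††` and `t = f†`, unfolding `s = t ∘ ⟨p ∘ s, id⟩` and then `t = f ∘ ⟨p ∘ t, id⟩` gives
`s = f ∘ ⟨p ∘ t ∘ ⟨p ∘ s, id⟩, ⟨p ∘ s, id⟩⟩`, and the inner `t ∘ ⟨p ∘ s, id⟩` folds back to `s`.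
-/

section GuardedFixpoint

variable {C : Type*} [Category C] [HasBinaryProducts C]

/-- With `a = p_X` this is the equation characterising `g†`. -/
def IsGuardedFixpoint {X Y P : C} (a : X ⟶ P) (g : P ⨯ Y ⟶ X) (s : Y ⟶ X) : Prop :=
  s = prod.lift (s ≫ a) (𝟙 Y) ≫ g

lemma isGuardedFixpoint_iff {X Y P : C} (a : X ⟶ P) (g : P ⨯ Y ⟶ X) (s : Y ⟶ X) :
    IsGuardedFixpoint a g s ↔ s = prod.lift s (𝟙 Y) ≫ prod.map a (𝟙 Y) ≫ g := by
  rw [IsGuardedFixpoint, prod.lift_map_assoc, Category.comp_id]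

lemma IsGuardedFixpoint.diag {X Y P : C} {a : X ⟶ P} {f : P ⨯ (P ⨯ Y) ⟶ X}
    {t : P ⨯ Y ⟶ X} {s : Y ⟶ X} (ht : IsGuardedFixpoint a f t)
    (hs : IsGuardedFixpoint a t s) :
    IsGuardedFixpoint a (prod.lift prod.fst (𝟙 _) ≫ f) s := by
  unfold IsGuardedFixpoint at *
  calc s = prod.lift (s ≫ a) (𝟙 Y) ≫ prod.lift (t ≫ a) (𝟙 _) ≫ f := by
        rw [← ht]; exact hs
    _ = prod.lift ((prod.lift (s ≫ a) (𝟙 Y) ≫ t) ≫ a) (prod.lift (s ≫ a) (𝟙 Y)) ≫ f := by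
        simp only [prod.comp_lift_assoc, Category.assoc, Category.comp_id]
    _ = prod.lift (s ≫ a) (𝟙 Y) ≫ prod.lift prod.fst (𝟙 _) ≫ f := by
        rw [← hs, prod.comp_lift_assoc, prod.lift_fst, Category.comp_id]

end GuardedFixpoint

theorem stmt7 {C : Type*} [Category C] [HasFiniteProducts C]
    (F : C ⥤ C) (p : 𝟭 C ⟶ F)
    (dag : ∀ {X Y : C}, (F.obj X ⨯ Y ⟶ X) → (Y ⟶ X))
    (hfix : ∀ {X Y : C} (f : F.obj X ⨯ Y ⟶ X),
      dag f = prod.lift (dag f) (𝟙 Y) ≫ prod.map (p.app X) (𝟙 Y) ≫ f)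
    (huniq : ∀ {X Y : C} (f : F.obj X ⨯ Y ⟶ X) (s : Y ⟶ X),
      s = prod.lift s (𝟙 Y) ≫ prod.map (p.app X) (𝟙 Y) ≫ f → s = dag f) :
    ∀ {X Y : C} (f : F.obj X ⨯ (F.obj X ⨯ Y) ⟶ X),
      dag (dag f) =
        dag (prod.lift (prod.fst : F.obj X ⨯ Y ⟶ F.obj X) (𝟙 (F.obj X ⨯ Y)) ≫ f) := by
  intro X Y f
  have dag_isGuardedFixpoint : ∀ {Z : C} (g : F.obj X ⨯ Z ⟶ X),
      IsGuardedFixpoint (p.app X) g (dag g) :=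
    fun g => (isGuardedFixpoint_iff _ _ _).2 (hfix g)
  exact huniq _ _ <| (isGuardedFixpoint_iff _ _ _).1 <|
    (dag_isGuardedFixpoint f).diag (dag_isGuardedFixpoint (dag f))
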